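/- Let C be a nonempty compact subset of ℝⁿ (EuclideanSpace ℝ (Fin n)). Then not every point of C lies strictly between two other points of C: there exists q ∈ C such that for all a, b ∈ C, q does not lie in the open segment between a and b (¬ Sbtw ℝ a q b). -/
import Mathlib

/-- A nonempty compact subset of `ℝⁿ` has a point which does not lie strictly
between two other points of the set. -/
theorem exists_point_not_sbtw_of_isCompact {n : ℕ}
    (C : Set (EuclideanSpace ℝ (Fin n))) (hC : IsCompact C) (hne : C.Nonempty) :
    ∃ q ∈ C, ∀ a ∈ C, ∀ b ∈ C, ¬ Sbtw ℝ a q b := by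
  obtain ⟨q, hqC, hmax⟩ := hC.exists_isMaxOn hne (continuous_norm.continuousOn)
  refine ⟨q, hqC, fun a ha b hb hsb => ?_⟩
  have hqa : q ≠ a := hsb.ne_left
  have hqb : q ≠ b := hsb.ne_right
  have hmem : q ∈ openSegment ℝ a b := mem_openSegment_of_ne_left_right hqa.symm hqb.symm hsb.wbtw.mem_segment
  by_cases hab : a = b
  · subst hab
    rw [openSegment_same] at hmem
    exact hqa hmem
  · obtain ⟨s, t, hs, ht, hst, hq⟩ := hmem
    have := norm_combo_lt_of_ne (hmax ha) (hmax hb) hab hs ht hst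
    rw [hq] at this
    exact lt_irrefl _ this
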